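/- arXiv:1802.03965 — 2 statements merged into one kernel-verified Lean document; each statement's English description precedes it below -/
import Mathlib

section
/- Let C ⊆ ℝᴺ be a closed convex set, let s₀ ∈ C, δ ∈ ℝᴺ, and denote by P the orthogonal projection onto C. Then for all θ ∈ (0,1], the map θ ↦ |P(s₀ + θδ) - s₀| / θ is non-increasing; in particular |P(s₀ + θδ) - s₀| ≥ θ |P(s₀ + δ) - s₀| for θ ∈ [0,1]. -/
open scoped RealInnerProductSpace

/-- Calamai–Moré estimate: for the metric projection `P` onto a closed convex set `C` in
`ℝᴺ` and `s₀ ∈ C`, the map `θ ↦ |P(s₀ + θδ) - s₀|/θ` is non-increasing on `(0,1]`; in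
particular `|P(s₀ + θδ) - s₀| ≥ θ|P(s₀ + δ) - s₀|` for `θ ∈ [0,1]`. -/
theorem stmt10 {N : ℕ} (C : Set (EuclideanSpace ℝ (Fin N)))
    (hC : IsClosed C) (hconv : Convex ℝ C)
    (P : EuclideanSpace ℝ (Fin N) → EuclideanSpace ℝ (Fin N))
    (hP : ∀ x, P x ∈ C ∧ ∀ c ∈ C, ‖x - P x‖ ≤ ‖x - c‖)
    (s₀ : EuclideanSpace ℝ (Fin N)) (hs₀ : s₀ ∈ C) (δ : EuclideanSpace ℝ (Fin N)) :
    (∀ θ₁ θ₂ : ℝ, 0 < θ₁ → θ₁ ≤ θ₂ → θ₂ ≤ 1 →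
      ‖P (s₀ + θ₂ • δ) - s₀‖ / θ₂ ≤ ‖P (s₀ + θ₁ • δ) - s₀‖ / θ₁) ∧
    (∀ θ : ℝ, 0 ≤ θ → θ ≤ 1 → θ * ‖P (s₀ + δ) - s₀‖ ≤ ‖P (s₀ + θ • δ) - s₀‖) := by
  -- variational inequality for the projection
  have vi : ∀ x, ∀ c ∈ C, ⟪x - P x, c - P x⟫ ≤ 0 := by
    intro x c hc
    have hmem : P x ∈ C := (hP x).1
    have hinf : ‖x - P x‖ = ⨅ w : C, ‖x - w‖ := by
      haveI : Nonempty C := ⟨⟨P x, hmem⟩⟩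
      refine le_antisymm (le_ciInf fun w => (hP x).2 w w.2) ?_
      exact ciInf_le ⟨0, fun _ ⟨_, h⟩ => h ▸ norm_nonneg _⟩ (⟨P x, hmem⟩ : C)
    exact (norm_eq_iInf_iff_real_inner_le_zero hconv hmem).mp hinf c hc
  have key : ∀ θ₁ θ₂ : ℝ, 0 < θ₁ → θ₁ ≤ θ₂ →
      θ₁ * ‖P (s₀ + θ₂ • δ) - s₀‖ ≤ θ₂ * ‖P (s₀ + θ₁ • δ) - s₀‖ := by
    intro θ₁ θ₂ h1 h12
    set p₁ := P (s₀ + θ₁ • δ) with hp₁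
    set p₂ := P (s₀ + θ₂ • δ) with hp₂
    set q₁ := p₁ - s₀
    set q₂ := p₂ - s₀
    have hA : ⟪(s₀ + θ₁ • δ) - p₁, p₂ - p₁⟫ ≤ 0 := vi _ _ (hP _).1
    have hB : ⟪(s₀ + θ₂ • δ) - p₂, p₁ - p₂⟫ ≤ 0 := vi _ _ (hP _).1
    have eA : (s₀ + θ₁ • δ) - p₁ = θ₁ • δ - q₁ := by simp [q₁]; abel
    have eB : (s₀ + θ₂ • δ) - p₂ = θ₂ • δ - q₂ := by simp [q₂]; abel
    have eC : p₂ - p₁ = q₂ - q₁ := by simp [q₁, q₂]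
    have eD : p₁ - p₂ = q₁ - q₂ := by simp [q₁, q₂]
    rw [eA, eC] at hA
    rw [eB, eD] at hB
    have hA' : θ₁ * ⟪δ, q₂⟫ - θ₁ * ⟪δ, q₁⟫ - ⟪q₁, q₂⟫ + ‖q₁‖ ^ 2 ≤ 0 := by
      have h := hA
      simp only [inner_sub_left, inner_sub_right, real_inner_smul_left] at h
      rw [← real_inner_self_eq_norm_sq]
      linarith
    have hB' : θ₂ * ⟪δ, q₁⟫ - θ₂ * ⟪δ, q₂⟫ - ⟪q₁, q₂⟫ + ‖q₂‖ ^ 2 ≤ 0 := by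
      have h := hB
      simp only [inner_sub_left, inner_sub_right, real_inner_smul_left] at h
      rw [real_inner_comm q₁ q₂] at h
      rw [← real_inner_self_eq_norm_sq]
      linarith
    have hmain : θ₂ * ‖q₁‖ ^ 2 + θ₁ * ‖q₂‖ ^ 2 ≤ (θ₁ + θ₂) * ⟪q₁, q₂⟫ := by nlinarith
    have hcs : ⟪q₁, q₂⟫ ≤ ‖q₁‖ * ‖q₂‖ := real_inner_le_norm _ _
    set a := ‖q₁‖
    set b := ‖q₂‖
    have ha : 0 ≤ a := norm_nonneg _
    have hb : 0 ≤ b := norm_nonneg _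
    have hprod : (a - b) * (θ₂ * a - θ₁ * b) ≤ 0 := by nlinarith
    by_contra hcon
    push_neg at hcon
    have hba : a < b := by nlinarith
    nlinarith
  constructor
  · intro θ₁ θ₂ h1 h12 h2
    rw [div_le_div_iff₀ (lt_of_lt_of_le h1 h12) h1]
    have := key θ₁ θ₂ h1 h12
    linarith [key θ₁ θ₂ h1 h12]
  · intro θ h0 h1
    rcases eq_or_lt_of_le h0 with h | h
    · rw [← h, zero_mul]; exact norm_nonneg _
    · have := key θ 1 h h1
      simpa using this
end

section
/- Let Ψ : ℝᴷ → ℝ be differentiable with derivative DΨ Lipschitz continuous on bounded sets, and let φ : ℝⁿ → ℝᴷ be globally Lipschitz with constant K_a. Fix R ≥ 0 and consider measures in B̄_p(R) (probability measures on ℝⁿ with p-th moment at most R, p ≥ 1). Then for the map H(m) = Ψ(∫φ dm) with derivative representative DH(m,x) = DΨ(∫φ dm)·φ(x), there exist constants K₁, K₂ such that for all m₁, m₂, m₃, m₄ ∈ B̄_p(R): |∫ DH(m₁,x) d(m₄ - m₃)(x)| ≤ K₂ d₁(m₃, m₄) and |∫ (DH(m₂,x) - DH(m₁,x)) d(m₄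 - m₃)(x)| ≤ K₁ d₁(m₁, m₂) d₁(m₃, m₄). -/
/-!
Both integrands have the form `x ↦ A (φ x)` for a continuous linear functional `A`, so they are
`‖A‖ * Ka`-Lipschitz, and integrating an `L`-Lipschitz function against `m₄ - m₃` costs at most
`L * W1 m₃ m₄` (compare the two integrals along any coupling). Since `p ≥ 1`, the `p`-th moment
bound gives first moments at most `1 + R`, so every `∫ φ dm` lies in the ball of radius
`‖φ 0‖ + Ka * (1 + R)`. On that ball `DΨ` is Lipschitz, hence bounded, which bounds
`‖DΨ(∫ φ dm₁)‖`, and `‖DΨ(∫ φ dm₂) - DΨ(∫ φ dm₁)‖ ≤ C * Ka * W1 m₁ m₂` by the same coupling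
estimate applied to `φ`.
-/

open MeasureTheory
open scoped ENNReal NNReal

/-- The Wasserstein-1 distance between two measures on `ℝⁿ`, defined as the infimum over
couplings of the integral of the distance. -/
noncomputable def W1 {n : ℕ} (μ ν : Measure (EuclideanSpace ℝ (Fin n))) : ℝ :=
  ⨅ π : {π : Measure (EuclideanSpace ℝ (Fin n) × EuclideanSpace ℝ (Fin n)) //
      π.map Prod.fst = μ ∧ π.map Prod.snd = ν},
    ∫ p, dist p.1 p.2 ∂(π : Measure (EuclideanSpace ℝ (Fin n) × EuclideanSpace ℝ (Fin n)))

open Metric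

section Moments

variable {E : Type*} [NormedAddCommGroup E] [MeasurableSpace E]

lemma lintegral_enorm_le_one_add_lintegral_rpow {p : ℝ} (hp : 1 ≤ p) (μ : Measure E)
    [IsProbabilityMeasure μ] :
    ∫⁻ x, ‖x‖ₑ ∂μ ≤ 1 + ∫⁻ x, (‖x‖₊ : ℝ≥0∞) ^ p ∂μ := by
  have hpointwise (t : ℝ≥0∞) : t ≤ 1 + t ^ p := by
    rcases le_or_gt t 1 with ht | ht
    · exact ht.trans le_self_add
    · calc t = t ^ (1 : ℝ) := (ENNReal.rpow_one t).symm
        _ ≤ t ^ p := ENNReal.rpow_le_rpow_of_exponent_le ht.le hp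
        _ ≤ 1 + t ^ p := le_add_self
  calc ∫⁻ x, ‖x‖ₑ ∂μ ≤ ∫⁻ x, 1 + (‖x‖₊ : ℝ≥0∞) ^ p ∂μ := lintegral_mono fun x => hpointwise _
    _ = 1 + ∫⁻ x, (‖x‖₊ : ℝ≥0∞) ^ p ∂μ := by
      rw [lintegral_add_left measurable_const, lintegral_const, measure_univ, mul_one]

variable {p R : ℝ} {μ : Measure E} [IsProbabilityMeasure μ]

lemma lintegral_enorm_le_of_lintegral_rpow_le (hp : 1 ≤ p) (hR : 0 ≤ R)
    (hμ : ∫⁻ x, (‖x‖₊ : ℝ≥0∞) ^ p ∂μ ≤ ENNReal.ofReal R) :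
    ∫⁻ x, ‖x‖ₑ ∂μ ≤ ENNReal.ofReal (1 + R) := by
  rw [ENNReal.ofReal_add zero_le_one hR, ENNReal.ofReal_one]
  exact (lintegral_enorm_le_one_add_lintegral_rpow hp μ).trans (by gcongr)

variable [BorelSpace E]

lemma integrable_norm_of_lintegral_rpow_le (hp : 1 ≤ p) (hR : 0 ≤ R)
    (hμ : ∫⁻ x, (‖x‖₊ : ℝ≥0∞) ^ p ∂μ ≤ ENNReal.ofReal R) :
    Integrable (fun x => ‖x‖) μ := by
  refine ⟨continuous_norm.aestronglyMeasurable, ?_⟩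
  simpa only [HasFiniteIntegral, enorm_norm] using
    (lintegral_enorm_le_of_lintegral_rpow_le hp hR hμ).trans_lt ENNReal.ofReal_lt_top

lemma integral_norm_le_of_lintegral_rpow_le (hp : 1 ≤ p) (hR : 0 ≤ R)
    (hμ : ∫⁻ x, (‖x‖₊ : ℝ≥0∞) ^ p ∂μ ≤ ENNReal.ofReal R) :
    ∫ x, ‖x‖ ∂μ ≤ 1 + R := by
  rw [integral_eq_lintegral_of_nonneg_ae (Filter.Eventually.of_forall fun x => norm_nonneg x)
    continuous_norm.aestronglyMeasurable]
  simp_rw [ofReal_norm]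
  exact ENNReal.toReal_le_of_le_ofReal (by linarith)
    (lintegral_enorm_le_of_lintegral_rpow_le hp hR hμ)

end Moments

namespace LipschitzWith

variable {E F : Type*} [NormedAddCommGroup E] [NormedAddCommGroup F] {f : E → F} {L : ℝ≥0}

lemma norm_le_norm_zero_add_mul (hf : LipschitzWith L f) (x : E) :
    ‖f x‖ ≤ ‖f 0‖ + L * ‖x‖ := by
  have := hf.dist_le_mul x 0
  rw [dist_eq_norm, dist_zero_right] at this
  linarith [norm_sub_norm_le (f x) (f 0)]

variable [MeasurableSpace E] [BorelSpace E] [SecondCountableTopology E]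

lemma integrable_of_integrable_norm (hf : LipschitzWith L f) {μ : Measure E}
    [IsFiniteMeasure μ] (hμ : Integrable (fun x => ‖x‖) μ) : Integrable f μ :=
  ((integrable_const ‖f 0‖).add (hμ.const_mul L)).mono' hf.continuous.aestronglyMeasurable
    (Filter.Eventually.of_forall hf.norm_le_norm_zero_add_mul)

variable [NormedSpace ℝ F]

lemma norm_integral_le (hf : LipschitzWith L f) {μ : Measure E} [IsProbabilityMeasure μ]
    (hμ : Integrable (fun x => ‖x‖) μ) :
    ‖∫ x, f x ∂μ‖ ≤ ‖f 0‖ + L * ∫ x, ‖x‖ ∂μ := by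
  calc ‖∫ x, f x ∂μ‖ ≤ ∫ x, ‖f x‖ ∂μ := norm_integral_le_integral_norm _
    _ ≤ ∫ x, (‖f 0‖ + L * ‖x‖) ∂μ :=
      integral_mono (hf.integrable_of_integrable_norm hμ).norm
        ((integrable_const _).add (hμ.const_mul _)) hf.norm_le_norm_zero_add_mul
    _ = ‖f 0‖ + L * ∫ x, ‖x‖ ∂μ := by
      rw [integral_add (integrable_const _) (hμ.const_mul _), integral_const,
        integral_const_mul, probReal_univ, one_smul]

/-- The easy half of Kantorovich–Rubinstein duality, for a single coupling. -/
lemma norm_integral_sub_le_integral_dist (hf : LipschitzWith L f)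
    {μ ν : Measure E} [IsFiniteMeasure μ] [IsFiniteMeasure ν]
    (hμ : Integrable (fun x => ‖x‖) μ) (hν : Integrable (fun x => ‖x‖) ν)
    {π : Measure (E × E)} (hπμ : π.map Prod.fst = μ) (hπν : π.map Prod.snd = ν) :
    ‖∫ x, f x ∂ν - ∫ x, f x ∂μ‖ ≤ L * ∫ q, dist q.1 q.2 ∂π := by
  have hf₁ : Integrable (fun q : E × E => f q.1) π :=
    (hπμ ▸ hf.integrable_of_integrable_norm hμ).comp_measurable measurable_fst
  have hf₂ : Integrable (fun q : E × E => f q.2) π :=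
    (hπν ▸ hf.integrable_of_integrable_norm hν).comp_measurable measurable_snd
  have hdist : Integrable (fun q : E × E => dist q.1 q.2) π := by
    refine (((hπμ ▸ hμ).comp_measurable measurable_fst).add
      ((hπν ▸ hν).comp_measurable measurable_snd)).mono'
      continuous_dist.aestronglyMeasurable (Filter.Eventually.of_forall fun q => ?_)
    simpa only [Real.norm_eq_abs, abs_dist, Pi.add_apply, Function.comp_apply] using dist_le_norm_add_norm q.1 q.2
  rw [← hπμ, ← hπν, integral_map measurable_fst.aemeasurable hf.continuous.aestronglyMeasurable,
    integral_map measurable_snd.aemeasurable hf.continuous.aestronglyMeasurable,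
    ← integral_sub hf₂ hf₁, ← integral_const_mul]
  refine (norm_integral_le_integral_norm _).trans
    (integral_mono (hf₂.sub hf₁).norm (hdist.const_mul _) fun q => ?_)
  simpa only [dist_comm q.2 q.1, dist_eq_norm] using hf.dist_le_mul q.2 q.1

end LipschitzWith

section Wasserstein

variable {n : ℕ}

lemma W1_nonneg (μ ν : Measure (EuclideanSpace ℝ (Fin n))) : 0 ≤ W1 μ ν :=
  Real.iInf_nonneg fun _ => integral_nonneg fun _ => dist_nonneg

lemma LipschitzWith.norm_integral_sub_le_W1 {F : Type*} [NormedAddCommGroup F]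
    [NormedSpace ℝ F] {f : EuclideanSpace ℝ (Fin n) → F} {L : ℝ≥0} (hf : LipschitzWith L f)
    {μ ν : Measure (EuclideanSpace ℝ (Fin n))} [IsProbabilityMeasure μ] [IsProbabilityMeasure ν]
    (hμ : Integrable (fun x => ‖x‖) μ) (hν : Integrable (fun x => ‖x‖) ν) :
    ‖∫ x, f x ∂ν - ∫ x, f x ∂μ‖ ≤ L * W1 μ ν := by
  have : Nonempty {π : Measure (EuclideanSpace ℝ (Fin n) × EuclideanSpace ℝ (Fin n)) //
      π.map Prod.fst = μ ∧ π.map Prod.snd = ν} :=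
    ⟨⟨μ.prod ν, by simp [Measure.map_fst_prod], by simp [Measure.map_snd_prod]⟩⟩
  rw [W1, Real.mul_iInf_of_nonneg L.coe_nonneg]
  exact le_ciInf fun π => hf.norm_integral_sub_le_integral_dist hμ hν π.2.1 π.2.2

end Wasserstein

theorem stmt16_general {n K : ℕ} (p R : ℝ) (hp : 1 ≤ p) (hR : 0 ≤ R)
    (Ψ : (Fin K → ℝ) → ℝ)
    (hΨ' : ∀ s : Set (Fin K → ℝ), Bornology.IsBounded s →
      ∃ C : ℝ, ∀ x ∈ s, ∀ y ∈ s, ‖fderiv ℝ Ψ x - fderiv ℝ Ψ y‖ ≤ C * ‖x - y‖)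
    (Ka : ℝ≥0) (φ : EuclideanSpace ℝ (Fin n) → (Fin K → ℝ))
    (hφ : LipschitzWith Ka φ) :
    ∃ K₁ K₂ : ℝ, ∀ m₁ m₂ m₃ m₄ : Measure (EuclideanSpace ℝ (Fin n)),
      IsProbabilityMeasure m₁ → IsProbabilityMeasure m₂ →
      IsProbabilityMeasure m₃ → IsProbabilityMeasure m₄ →
      (∫⁻ x, (‖x‖₊ : ℝ≥0∞) ^ p ∂m₁ ≤ ENNReal.ofReal R) →
      (∫⁻ x, (‖x‖₊ : ℝ≥0∞) ^ p ∂m₂ ≤ ENNReal.ofReal R) →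
      (∫⁻ x, (‖x‖₊ : ℝ≥0∞) ^ p ∂m₃ ≤ ENNReal.ofReal R) →
      (∫⁻ x, (‖x‖₊ : ℝ≥0∞) ^ p ∂m₄ ≤ ENNReal.ofReal R) →
      (|(∫ x, fderiv ℝ Ψ (∫ y, φ y ∂m₁) (φ x) ∂m₄) -
          (∫ x, fderiv ℝ Ψ (∫ y, φ y ∂m₁) (φ x) ∂m₃)| ≤ K₂ * W1 m₃ m₄) ∧
      (|(∫ x, (fderiv ℝ Ψ (∫ y, φ y ∂m₂) (φ x) - fderiv ℝ Ψ (∫ y, φ y ∂m₁) (φ x)) ∂m₄) -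
          (∫ x, (fderiv ℝ Ψ (∫ y, φ y ∂m₂) (φ x) - fderiv ℝ Ψ (∫ y, φ y ∂m₁) (φ x)) ∂m₃)|
        ≤ K₁ * W1 m₁ m₂ * W1 m₃ m₄) := by
  set D := fderiv ℝ Ψ
  set B : ℝ := ‖φ 0‖ + Ka * (1 + R)
  obtain ⟨C, hC⟩ : ∃ C : ℝ≥0, LipschitzOnWith C D (closedBall 0 B) := by
    obtain ⟨C, hC⟩ := hΨ' _ isBounded_closedBall
    exact ⟨_, LipschitzOnWith.of_dist_le' (by simpa only [dist_eq_norm] using hC)⟩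
  have hD_le : ∀ z ∈ closedBall (0 : Fin K → ℝ) B, ‖D z‖ ≤ ‖D 0‖ + C * B := by
    intro z hz
    have hDz := hC.dist_le_mul z hz 0 (mem_closedBall_self (by positivity))
    rw [dist_eq_norm, dist_zero_right] at hDz
    calc ‖D z‖ ≤ ‖D 0‖ + ‖D z - D 0‖ := by linarith [norm_sub_norm_le (D z) (D 0)]
      _ ≤ ‖D 0‖ + C * B := by grw [hDz, mem_closedBall_zero_iff.1 hz]
  have hmean : ∀ (m : Measure (EuclideanSpace ℝ (Fin n))) [IsProbabilityMeasure m],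
      ∫⁻ x, (‖x‖₊ : ℝ≥0∞) ^ p ∂m ≤ ENNReal.ofReal R →
      Integrable (fun x => ‖x‖) m ∧ ∫ y, φ y ∂m ∈ closedBall 0 B := by
    intro m _ hm
    have hi := integrable_norm_of_lintegral_rpow_le hp hR hm
    refine ⟨hi, mem_closedBall_zero_iff.2 ((hφ.norm_integral_le hi).trans ?_)⟩
    grw [integral_norm_le_of_lintegral_rpow_le hp hR hm]
  refine ⟨C * Ka * Ka, (‖D 0‖ + C * B) * Ka, fun m₁ m₂ m₃ m₄ _ _ _ _ h₁ h₂ h₃ h₄ => ?_⟩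
  obtain ⟨hi₁, hz₁⟩ := hmean m₁ h₁
  obtain ⟨hi₂, hz₂⟩ := hmean m₂ h₂
  have hi₃ := (hmean m₃ h₃).1
  have hi₄ := (hmean m₄ h₄).1
  have hW := W1_nonneg m₃ m₄
  constructor
  · calc _ ≤ ‖D (∫ y, φ y ∂m₁)‖ * Ka * W1 m₃ m₄ := by
          simpa using ((D _).lipschitz.comp hφ).norm_integral_sub_le_W1 hi₃ hi₄
      _ ≤ _ := by grw [hD_le _ hz₁]
  · have hz : ‖∫ y, φ y ∂m₂ - ∫ y, φ y ∂m₁‖ ≤ Ka * W1 m₁ m₂ :=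
      hφ.norm_integral_sub_le_W1 hi₁ hi₂
    calc _ ≤ ‖D (∫ y, φ y ∂m₂) - D (∫ y, φ y ∂m₁)‖ * Ka * W1 m₃ m₄ := by
          simpa using ((D _ - D _).lipschitz.comp hφ).norm_integral_sub_le_W1 hi₃ hi₄
      _ ≤ C * ‖∫ y, φ y ∂m₂ - ∫ y, φ y ∂m₁‖ * Ka * W1 m₃ m₄ := by
          grw [← dist_eq_norm, ← dist_eq_norm, hC.dist_le_mul _ hz₂ _ hz₁]
      _ ≤ C * (Ka * W1 m₁ m₂) * Ka * W1 m₃ m₄ := by grw [hz]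
      _ = C * Ka * Ka * W1 m₁ m₂ * W1 m₃ m₄ := by ring

/-- For `H(m) = Ψ(∫φ dm)` with `Ψ` differentiable with locally Lipschitz derivative and
`φ` globally Lipschitz, the derivative representative `DH(m,x) = DΨ(∫φ dm)(φ(x))`
satisfies the boundedness and Lipschitz estimates of Assumption 5 on `B̄_p(R)`. -/
theorem stmt16 {n K : ℕ} (p R : ℝ) (hp : 1 ≤ p) (hR : 0 ≤ R)
    (Ψ : (Fin K → ℝ) → ℝ) (hΨ : Differentiable ℝ Ψ)
    (hΨ' : ∀ s : Set (Fin K → ℝ), Bornology.IsBounded s →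
      ∃ C : ℝ, ∀ x ∈ s, ∀ y ∈ s, ‖fderiv ℝ Ψ x - fderiv ℝ Ψ y‖ ≤ C * ‖x - y‖)
    (Ka : ℝ≥0) (φ : EuclideanSpace ℝ (Fin n) → (Fin K → ℝ))
    (hφ : LipschitzWith Ka φ) :
    ∃ K₁ K₂ : ℝ, ∀ m₁ m₂ m₃ m₄ : Measure (EuclideanSpace ℝ (Fin n)),
      IsProbabilityMeasure m₁ → IsProbabilityMeasure m₂ →
      IsProbabilityMeasure m₃ → IsProbabilityMeasure m₄ →
      (∫⁻ x, (‖x‖₊ : ℝ≥0∞) ^ p ∂m₁ ≤ ENNReal.ofReal R) →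
      (∫⁻ x, (‖x‖₊ : ℝ≥0∞) ^ p ∂m₂ ≤ ENNReal.ofReal R) →
      (∫⁻ x, (‖x‖₊ : ℝ≥0∞) ^ p ∂m₃ ≤ ENNReal.ofReal R) →
      (∫⁻ x, (‖x‖₊ : ℝ≥0∞) ^ p ∂m₄ ≤ ENNReal.ofReal R) →
      (|(∫ x, fderiv ℝ Ψ (∫ y, φ y ∂m₁) (φ x) ∂m₄) -
          (∫ x, fderiv ℝ Ψ (∫ y, φ y ∂m₁) (φ x) ∂m₃)| ≤ K₂ * W1 m₃ m₄) ∧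
      (|(∫ x, (fderiv ℝ Ψ (∫ y, φ y ∂m₂) (φ x) - fderiv ℝ Ψ (∫ y, φ y ∂m₁) (φ x)) ∂m₄) -
          (∫ x, (fderiv ℝ Ψ (∫ y, φ y ∂m₂) (φ x) - fderiv ℝ Ψ (∫ y, φ y ∂m₁) (φ x)) ∂m₃)|
        ≤ K₁ * W1 m₁ m₂ * W1 m₃ m₄) :=
  stmt16_general p R hp hR Ψ hΨ' Ka φ hφ
end
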